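/- Let X, Y be real Banach spaces and φ:S(X)→S(Y) a uniformly continuous map. Then for every p ∈ [1,∞), the map Φ_p:S(ℓ_p(ℕ,X)) → S(ℓ_p(ℕ,Y)) defined by Φ_p((x_i)_i) := (φ̄(x_i))_i is well defined (it maps the unit sphere to the unit sphere), is uniformly continuous, and is Sym(ℕ)-equivariant. Moreover, if δ(t) := C·t^α is an upper modulus of continuity of φ for some C > 0 and α ∈ (0,1], then δ'(t) := (2C+2)·t^α is an upper modulus of continuity of Φ_p. -/

import Mathlib

open scoped ENNReal Classical

/-- The canonical extension by homogeneity of a map between unit spheres. -/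
noncomputable def canExt {X Y : Type*} [NormedAddCommGroup X] [NormedSpace ℝ X]
    [NormedAddCommGroup Y] [NormedSpace ℝ Y]
    (φ : Metric.sphere (0:X) 1 → Metric.sphere (0:Y) 1) (x : X) : Y :=
  if hx : x = 0 then 0 else
    ‖x‖ • (φ ⟨‖x‖⁻¹ • x, by
      rw [mem_sphere_zero_iff_norm, norm_smul, norm_inv, norm_norm,
        inv_mul_cancel₀ (norm_ne_zero_iff.mpr hx)]⟩ : Y)

/-- `δ` is an upper modulus of continuity of the map `ψ` between unit spheres. -/
def IsUpperModulus {X Y : Type*} [NormedAddCommGroup X] [NormedAddCommGroup Y]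
    (ψ : Metric.sphere (0:X) 1 → Metric.sphere (0:Y) 1) (δ : ℝ → ℝ) : Prop :=
  (∀ s t, 0 ≤ s → s ≤ t → t ≤ 2 → δ s ≤ δ t) ∧
  (∀ t, 0 ≤ t → t ≤ 2 → 0 ≤ δ t) ∧
  Filter.Tendsto δ (nhdsWithin 0 (Set.Ioi 0)) (nhds 0) ∧
  (∀ x₁ x₂ : Metric.sphere (0:X) 1, ‖(ψ x₁ : Y) - (ψ x₂ : Y)‖ ≤ δ ‖(x₁ : X) - (x₂ : X)‖)

/-- Generalized inverse `δ⁻¹(s) = inf {t ∈ [0,2] : δ(t) ≥ s}`. -/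
noncomputable def modInv (δ : ℝ → ℝ) (s : ℝ) : ℝ :=
  sInf {t : ℝ | t ∈ Set.Icc (0:ℝ) 2 ∧ s ≤ δ t}

section AuxPointwise

variable {X Y : Type*} [NormedAddCommGroup X] [NormedSpace ℝ X]
    [NormedAddCommGroup Y] [NormedSpace ℝ Y]
    (φ : Metric.sphere (0:X) 1 → Metric.sphere (0:Y) 1)

lemma canExt_zero : canExt φ (0 : X) = 0 := by simp [canExt]

lemma norm_canExt (u : X) : ‖canExt φ u‖ = ‖u‖ := by
  by_cases hu : u = 0
  · simp [hu, canExt_zero]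
  · rw [canExt, dif_neg hu, norm_smul, norm_norm, norm_eq_of_mem_sphere, mul_one]

lemma mem_unit_sphere {u : X} (hu : u ≠ 0) : ‖u‖⁻¹ • u ∈ Metric.sphere (0:X) 1 := by
  rw [mem_sphere_zero_iff_norm, norm_smul, norm_inv, norm_norm,
    inv_mul_cancel₀ (norm_ne_zero_iff.mpr hu)]

lemma canExt_eq_smul {u : X} (hu : u ≠ 0) (a : Metric.sphere (0:X) 1)
    (ha : (a : X) = ‖u‖⁻¹ • u) : canExt φ u = ‖u‖ • (φ a : Y) := by
  rw [canExt, dif_neg hu]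
  exact congrArg (fun z : Metric.sphere (0:X) 1 => ‖u‖ • (φ z : Y)) (Subtype.ext ha.symm)

lemma canExt_sub_bound {u v : X} (hu : u ≠ 0) (hv : v ≠ 0)
    (a b : Metric.sphere (0:X) 1) (ha : (a:X) = ‖u‖⁻¹ • u) (hb : (b:X) = ‖v‖⁻¹ • v) :
    ‖canExt φ u - canExt φ v‖ ≤ ‖u - v‖ + ‖v‖ * ‖(φ a : Y) - (φ b : Y)‖ := by
  rw [canExt_eq_smul φ hu a ha, canExt_eq_smul φ hv b hb]
  have hid : ‖u‖ • (φ a : Y) - ‖v‖ • (φ b : Y)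
      = (‖u‖ - ‖v‖) • (φ a : Y) + ‖v‖ • ((φ a : Y) - (φ b : Y)) := by module
  rw [hid]
  refine (norm_add_le _ _).trans ?_
  rw [norm_smul, norm_smul, Real.norm_eq_abs, Real.norm_eq_abs, norm_eq_of_mem_sphere,
    mul_one, abs_of_nonneg (norm_nonneg v)]
  exact add_le_add_left (abs_norm_sub_norm_le u v) _

lemma unit_sub_bound {u v : X} (hu : u ≠ 0) (hv : v ≠ 0) (hvu : ‖v‖ ≤ ‖u‖) :
    ‖(‖u‖⁻¹ • u) - (‖v‖⁻¹ • v)‖ * ‖u‖ ≤ 2 * ‖u - v‖ := by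
  have hr : (0:ℝ) < ‖u‖ := norm_pos_iff.mpr hu
  have hs : (0:ℝ) < ‖v‖ := norm_pos_iff.mpr hv
  have hab : (‖u‖⁻¹ • u) - (‖v‖⁻¹ • v) = ‖u‖⁻¹ • (u - v) + (‖u‖⁻¹ - ‖v‖⁻¹) • v := by
    module
  have habs : |‖u‖⁻¹ - ‖v‖⁻¹| = ‖v‖⁻¹ - ‖u‖⁻¹ := by
    rw [abs_of_nonpos (by simp only [sub_nonpos]; exact inv_anti₀ hs hvu)]
    ring
  have h1 : ‖(‖u‖⁻¹ • u) - (‖v‖⁻¹ • v)‖ ≤ ‖u‖⁻¹ * ‖u - v‖ + (‖v‖⁻¹ - ‖u‖⁻¹) * ‖v‖ := by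
    rw [hab]
    refine (norm_add_le _ _).trans ?_
    rw [norm_smul, norm_smul, norm_inv, norm_norm, Real.norm_eq_abs, habs]
  have h3 : ‖u‖ - ‖v‖ ≤ ‖u - v‖ := norm_sub_norm_le u v
  have hiu : ‖u‖⁻¹ * ‖u‖ = 1 := inv_mul_cancel₀ hr.ne'
  have hiv : ‖v‖⁻¹ * ‖v‖ = 1 := inv_mul_cancel₀ hs.ne'
  have h2 : (‖v‖⁻¹ - ‖u‖⁻¹) * ‖v‖ ≤ ‖u‖⁻¹ * ‖u - v‖ := by
    have := mul_le_mul_of_nonneg_left h3 (inv_pos.mpr hr).le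
    nlinarith
  have h5 : ‖(‖u‖⁻¹ • u) - (‖v‖⁻¹ • v)‖ ≤ 2 * (‖u‖⁻¹ * ‖u - v‖) := by linarith
  have := mul_le_mul_of_nonneg_right h5 hr.le
  nlinarith

lemma canExt_key (u v : X) :
    ‖canExt φ u - canExt φ v‖ ≤ ‖u - v‖ ∨
    ∃ a b : Metric.sphere (0:X) 1,
      ‖(a:X) - (b:X)‖ * max ‖u‖ ‖v‖ ≤ 2 * ‖u - v‖ ∧
      ‖canExt φ u - canExt φ v‖ ≤ ‖u - v‖ + min ‖u‖ ‖v‖ * ‖(φ a : Y) - (φ b : Y)‖ := by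
  by_cases hu : u = 0
  · left; simp [hu, canExt_zero, norm_canExt]
  by_cases hv : v = 0
  · left; simp [hv, canExt_zero, norm_canExt]
  rcases le_total ‖v‖ ‖u‖ with h | h
  · right
    refine ⟨⟨‖u‖⁻¹ • u, mem_unit_sphere hu⟩, ⟨‖v‖⁻¹ • v, mem_unit_sphere hv⟩, ?_, ?_⟩
    · rw [max_eq_left h]; exact unit_sub_bound hu hv h
    · rw [min_eq_right h]; exact canExt_sub_bound φ hu hv _ _ rfl rfl
  · right
    refine ⟨⟨‖u‖⁻¹ • u, mem_unit_sphere hu⟩, ⟨‖v‖⁻¹ • v, mem_unit_sphere hv⟩, ?_, ?_⟩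
    · rw [max_eq_right h]
      have := unit_sub_bound hv hu h
      rw [norm_sub_rev (‖v‖⁻¹ • v) _, norm_sub_rev v u] at this
      exact this
    · rw [min_eq_left h, norm_sub_rev (canExt φ u) _, norm_sub_rev u v]
      have := canExt_sub_bound φ hv hu ⟨‖v‖⁻¹ • v, mem_unit_sphere hv⟩
        ⟨‖u‖⁻¹ • u, mem_unit_sphere hu⟩ rfl rfl
      rwa [norm_sub_rev ((φ ⟨‖v‖⁻¹ • v, mem_unit_sphere hv⟩ : Y)) _] at this

end AuxPointwise
section AuxBounds

variable {X Y : Type*} [NormedAddCommGroup X] [NormedSpace ℝ X]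
    [NormedAddCommGroup Y] [NormedSpace ℝ Y]
    (φ : Metric.sphere (0:X) 1 → Metric.sphere (0:Y) 1)

lemma canExt_uc_bound {ε t : ℝ} (hε : 0 ≤ ε) (ht : 0 < t)
    (hmod : ∀ a b : Metric.sphere (0:X) 1, ‖(a:X) - (b:X)‖ ≤ t → ‖(φ a : Y) - (φ b : Y)‖ ≤ ε)
    (u v : X) :
    ‖canExt φ u - canExt φ v‖ ≤ (1 + 4/t) * ‖u - v‖ + ε * min ‖u‖ ‖v‖ := by
  have hmin0 : 0 ≤ min ‖u‖ ‖v‖ := le_min (norm_nonneg u) (norm_nonneg v)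
  have hmax0 : 0 ≤ max ‖u‖ ‖v‖ := le_trans hmin0 min_le_max
  have ht4 : 0 < 4/t := by positivity
  have hd0 : (0:ℝ) ≤ ‖u - v‖ := norm_nonneg _
  rcases canExt_key φ u v with h | ⟨a, b, h1, h2⟩
  · nlinarith [mul_nonneg hε hmin0]
  have hφ0 : 0 ≤ ‖(φ a : Y) - (φ b : Y)‖ := norm_nonneg _
  rcases le_or_gt ‖(a:X) - (b:X)‖ t with hab | hab
  · have hm := hmod a b hab
    nlinarith [mul_le_mul_of_nonneg_left hm hmin0]
  · have hmax : t * max ‖u‖ ‖v‖ ≤ 2 * ‖u - v‖ :=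
      le_trans (mul_le_mul_of_nonneg_right hab.le hmax0) h1
    have hw : ‖(φ a : Y) - (φ b : Y)‖ ≤ 2 := by
      refine (norm_sub_le _ _).trans ?_
      rw [norm_eq_of_mem_sphere, norm_eq_of_mem_sphere]; norm_num
    have hkey : min ‖u‖ ‖v‖ * ‖(φ a : Y) - (φ b : Y)‖ ≤ 4/t * ‖u - v‖ := by
      have h2max : 2 * max ‖u‖ ‖v‖ ≤ 4/t * ‖u - v‖ := by
        rw [div_mul_eq_mul_div, le_div_iff₀ ht]
        nlinarith
      have : min ‖u‖ ‖v‖ * ‖(φ a : Y) - (φ b : Y)‖ ≤ 2 * max ‖u‖ ‖v‖ := by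
        nlinarith [min_le_max (a := ‖u‖) (b := ‖v‖)]
      linarith
    nlinarith [mul_nonneg hε hmin0]

lemma canExt_holder_bound {C α : ℝ} (hC : 0 < C) (hα : 0 < α) (hα1 : α ≤ 1)
    (hmod : ∀ a b : Metric.sphere (0:X) 1,
      ‖(φ a : Y) - (φ b : Y)‖ ≤ C * ‖(a:X) - (b:X)‖ ^ α)
    (u v : X) :
    ‖canExt φ u - canExt φ v‖
      ≤ ‖u - v‖ + 2*C * ((min ‖u‖ ‖v‖) ^ (1-α) * ‖u - v‖ ^ α) := by
  have hmin0 : 0 ≤ min ‖u‖ ‖v‖ := le_min (norm_nonneg u) (norm_nonneg v)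
  have hd0 : (0:ℝ) ≤ ‖u - v‖ := norm_nonneg _
  have hpos : 0 ≤ 2*C * ((min ‖u‖ ‖v‖) ^ (1-α) * ‖u - v‖ ^ α) := by positivity
  rcases canExt_key φ u v with h | ⟨a, b, h1, h2⟩
  · linarith
  set m := min ‖u‖ ‖v‖ with hm
  set M := max ‖u‖ ‖v‖ with hM
  set d := ‖u - v‖ with hdd
  set e := ‖(a:X) - (b:X)‖ with he
  have he0 : 0 ≤ e := norm_nonneg _
  have hw : ‖(φ a : Y) - (φ b : Y)‖ ≤ C * e ^ α := hmod a b
  have h2α2 : (2:ℝ) ^ α ≤ 2 := by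
    calc (2:ℝ) ^ α ≤ (2:ℝ) ^ (1:ℝ) := Real.rpow_le_rpow_of_exponent_le one_le_two hα1
    _ = 2 := Real.rpow_one 2
  have hsuff : m * ‖(φ a : Y) - (φ b : Y)‖ ≤ 2*C * (m ^ (1-α) * d ^ α) := by
    rcases le_or_gt m d with hmd | hdm
    · -- m ≤ d
      have he2 : e ≤ 2 := by
        rw [he]
        refine (norm_sub_le _ _).trans ?_
        rw [norm_eq_of_mem_sphere, norm_eq_of_mem_sphere]; norm_num
      have heα : e ^ α ≤ 2 := le_trans (Real.rpow_le_rpow he0 he2 hα.le) h2α2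
      have hw2 : ‖(φ a : Y) - (φ b : Y)‖ ≤ 2*C := by
        calc ‖(φ a : Y) - (φ b : Y)‖ ≤ C * e ^ α := hw
        _ ≤ C * 2 := mul_le_mul_of_nonneg_left heα hC.le
        _ = 2*C := by ring
      have hsplit : m = m ^ (1-α) * m ^ α := by
        rw [← Real.rpow_add' hmin0 (by norm_num), show (1-α)+α = (1:ℝ) by ring,
          Real.rpow_one]
      have hmα : m ^ α ≤ d ^ α := Real.rpow_le_rpow hmin0 hmd hα.le
      calc m * ‖(φ a : Y) - (φ b : Y)‖ ≤ m * (2*C) :=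
            mul_le_mul_of_nonneg_left hw2 hmin0
      _ = 2*C * (m ^ (1-α) * m ^ α) := by rw [← hsplit]; ring
      _ ≤ 2*C * (m ^ (1-α) * d ^ α) := by
          have h1α0 : (0:ℝ) ≤ m ^ (1-α) := Real.rpow_nonneg hmin0 _
          nlinarith [mul_le_mul_of_nonneg_left hmα h1α0]
    · -- d < m
      have hm0' : 0 < m := lt_of_le_of_lt hd0 hdm
      have hM0 : 0 < M := lt_of_lt_of_le hm0' min_le_max
      have heM : e ≤ 2*d/M := by
        rw [le_div_iff₀ hM0]; linarith
      have hw2 : ‖(φ a : Y) - (φ b : Y)‖ ≤ C * (2*d/M) ^ α :=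
        hw.trans (mul_le_mul_of_nonneg_left
          (Real.rpow_le_rpow he0 heM hα.le) hC.le)
      have hMα : 0 < M ^ α := Real.rpow_pos_of_pos hM0 α
      have hmαpos : 0 < m ^ α := Real.rpow_pos_of_pos hm0' α
      have hmM : m ^ α ≤ M ^ α := Real.rpow_le_rpow hmin0 min_le_max hα.le
      have key1 : m / M ^ α ≤ m ^ (1-α) := by
        have h1 : m / M ^ α ≤ m / m ^ α := by
          rw [div_le_div_iff₀ hMα hmαpos]
          nlinarith
        have h2 : m / m ^ α = m ^ (1-α) := by
          rw [Real.rpow_sub hm0', Real.rpow_one]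
        linarith
      have hexp : (2*d/M) ^ α = 2 ^ α * d ^ α / M ^ α := by
        rw [Real.div_rpow (by positivity) hM0.le, Real.mul_rpow (by norm_num) hd0]
      calc m * ‖(φ a : Y) - (φ b : Y)‖ ≤ m * (C * (2*d/M) ^ α) :=
            mul_le_mul_of_nonneg_left hw2 hmin0
      _ = C * (2 ^ α * d ^ α) * (m / M ^ α) := by rw [hexp]; ring
      _ ≤ C * (2 ^ α * d ^ α) * m ^ (1-α) :=
            mul_le_mul_of_nonneg_left key1 (by positivity)
      _ ≤ 2*C * (m ^ (1-α) * d ^ α) := by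
          have hdα0 : (0:ℝ) ≤ d ^ α := Real.rpow_nonneg hd0 _
          have hm1α0 : (0:ℝ) ≤ m ^ (1-α) := Real.rpow_nonneg hmin0 _
          nlinarith [mul_nonneg (mul_nonneg hC.le hdα0) hm1α0]
  linarith

end AuxBounds
section LpMaster

lemma lp_norm_le_add {Y : Type*} [NormedAddCommGroup Y]
    {p : ℝ} (hp : 1 ≤ p) [Fact (1 ≤ ENNReal.ofReal p)]
    (f : lp (fun _ : ℕ => Y) (ENNReal.ofReal p)) (a b : ℕ → ℝ)
    (ha0 : ∀ i, 0 ≤ a i) (hb0 : ∀ i, 0 ≤ b i)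
    (hfab : ∀ i, ‖f i‖ ≤ a i + b i)
    (hsa : Summable fun i => a i ^ p) (hsb : Summable fun i => b i ^ p)
    (A B : ℝ) (hA : 0 ≤ A) (hB : 0 ≤ B)
    (hAs : ∑' i, a i ^ p ≤ A ^ p) (hBs : ∑' i, b i ^ p ≤ B ^ p) :
    ‖f‖ ≤ A + B := by
  have hp0 : 0 < p := lt_of_lt_of_le one_pos hp
  have hqt : (ENNReal.ofReal p).toReal = p := ENNReal.toReal_ofReal hp0.le
  have hqt0 : 0 < (ENNReal.ofReal p).toReal := by rw [hqt]; exact hp0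
  have haMem : Memℓp a (ENNReal.ofReal p) := by
    apply memℓp_gen
    have : (fun i => ‖a i‖ ^ (ENNReal.ofReal p).toReal) = fun i => a i ^ p := by
      funext i; rw [hqt, Real.norm_of_nonneg (ha0 i)]
    rw [this]; exact hsa
  have hbMem : Memℓp b (ENNReal.ofReal p) := by
    apply memℓp_gen
    have : (fun i => ‖b i‖ ^ (ENNReal.ofReal p).toReal) = fun i => b i ^ p := by
      funext i; rw [hqt, Real.norm_of_nonneg (hb0 i)]
    rw [this]; exact hsb
  set A' : lp (fun _ : ℕ => ℝ) (ENNReal.ofReal p) := ⟨a, haMem⟩ with hA'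
  set B' : lp (fun _ : ℕ => ℝ) (ENNReal.ofReal p) := ⟨b, hbMem⟩ with hB'
  have hstep1 : ‖f‖ ≤ ‖A' + B'‖ := by
    rw [← Real.rpow_le_rpow_iff (norm_nonneg _) (norm_nonneg _) hqt0,
      lp.norm_rpow_eq_tsum hqt0, lp.norm_rpow_eq_tsum hqt0]
    refine Summable.tsum_le_tsum (fun i => ?_) (lp.hasSum_norm hqt0 f).summable
      (lp.hasSum_norm hqt0 (A' + B')).summable
    refine Real.rpow_le_rpow (norm_nonneg _) ?_ hqt0.le
    have : (A' + B') i = a i + b i := rfl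
    rw [this, Real.norm_of_nonneg (add_nonneg (ha0 i) (hb0 i))]
    exact hfab i
  have hnA : ‖A'‖ ≤ A := by
    rw [← Real.rpow_le_rpow_iff (norm_nonneg _) hA hqt0, lp.norm_rpow_eq_tsum hqt0]
    calc ∑' i, ‖A' i‖ ^ (ENNReal.ofReal p).toReal = ∑' i, a i ^ p := by
          congr 1; funext i; rw [hqt]; congr 1; exact Real.norm_of_nonneg (ha0 i)
    _ ≤ A ^ p := hAs
    _ = A ^ (ENNReal.ofReal p).toReal := by rw [hqt]
  have hnB : ‖B'‖ ≤ B := by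
    rw [← Real.rpow_le_rpow_iff (norm_nonneg _) hB hqt0, lp.norm_rpow_eq_tsum hqt0]
    calc ∑' i, ‖B' i‖ ^ (ENNReal.ofReal p).toReal = ∑' i, b i ^ p := by
          congr 1; funext i; rw [hqt]; congr 1; exact Real.norm_of_nonneg (hb0 i)
    _ ≤ B ^ p := hBs
    _ = B ^ (ENNReal.ofReal p).toReal := by rw [hqt]
  calc ‖f‖ ≤ ‖A' + B'‖ := hstep1
  _ ≤ ‖A'‖ + ‖B'‖ := norm_add_le _ _
  _ ≤ A + B := add_le_add hnA hnB

end LpMaster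
section SumLemmas

lemma min_summable {p : ℝ} (hp : 1 ≤ p) [Fact (1 ≤ ENNReal.ofReal p)]
    {X Z : Type*} [NormedAddCommGroup X] [NormedAddCommGroup Z]
    (x : lp (fun _ : ℕ => X) (ENNReal.ofReal p))
    (y : lp (fun _ : ℕ => Z) (ENNReal.ofReal p)) (hx : ‖x‖ = 1) :
    Summable (fun i => (min ‖x i‖ ‖y i‖) ^ p) ∧
      ∑' i, (min ‖x i‖ ‖y i‖) ^ p ≤ 1 := by
  have hp0 : 0 < p := lt_of_lt_of_le one_pos hp
  have hqt : (ENNReal.ofReal p).toReal = p := ENNReal.toReal_ofReal hp0.le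
  have hqt0 : 0 < (ENNReal.ofReal p).toReal := by rw [hqt]; exact hp0
  have hxs : Summable fun i => ‖x i‖ ^ p := by
    have := (lp.hasSum_norm hqt0 x).summable; rwa [hqt] at this
  have hle : ∀ i, (min ‖x i‖ ‖y i‖) ^ p ≤ ‖x i‖ ^ p := fun i =>
    Real.rpow_le_rpow (le_min (norm_nonneg _) (norm_nonneg _)) (min_le_left _ _) hp0.le
  have hs : Summable (fun i => (min ‖x i‖ ‖y i‖) ^ p) :=
    Summable.of_nonneg_of_le
      (fun i => Real.rpow_nonneg (le_min (norm_nonneg _) (norm_nonneg _)) _) hle hxs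
  refine ⟨hs, ?_⟩
  calc ∑' i, (min ‖x i‖ ‖y i‖) ^ p ≤ ∑' i, ‖x i‖ ^ p := Summable.tsum_le_tsum hle hs hxs
  _ = ‖x‖ ^ p := by
      have h2 := lp.norm_rpow_eq_tsum hqt0 x
      rw [hqt] at h2
      exact h2.symm
  _ = 1 := by rw [hx, Real.one_rpow]

lemma norm_sub_summable {p : ℝ} (hp : 1 ≤ p) [Fact (1 ≤ ENNReal.ofReal p)]
    {X : Type*} [NormedAddCommGroup X]
    (x y : lp (fun _ : ℕ => X) (ENNReal.ofReal p)) :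
    Summable (fun i => ‖x i - y i‖ ^ p) ∧
      ∑' i, ‖x i - y i‖ ^ p = ‖x - y‖ ^ p := by
  have hp0 : 0 < p := lt_of_lt_of_le one_pos hp
  have hqt : (ENNReal.ofReal p).toReal = p := ENNReal.toReal_ofReal hp0.le
  have hqt0 : 0 < (ENNReal.ofReal p).toReal := by rw [hqt]; exact hp0
  have h := lp.hasSum_norm hqt0 (x - y)
  rw [hqt] at h
  exact ⟨h.summable, h.tsum_eq⟩

end SumLemmas
section PhiLp

variable {X Y : Type*} [NormedAddCommGroup X] [NormedSpace ℝ X]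
    [NormedAddCommGroup Y] [NormedSpace ℝ Y]

noncomputable def PhiLp (φ : Metric.sphere (0:X) 1 → Metric.sphere (0:Y) 1)
    {p : ℝ} (hp : 1 ≤ p) [Fact (1 ≤ ENNReal.ofReal p)]
    (x : lp (fun _ : ℕ => X) (ENNReal.ofReal p)) :
    lp (fun _ : ℕ => Y) (ENNReal.ofReal p) :=
  ⟨fun i => canExt φ (x i), by
    have hp0 : 0 < p := lt_of_lt_of_le one_pos hp
    have hqt : (ENNReal.ofReal p).toReal = p := ENNReal.toReal_ofReal hp0.le
    have hqt0 : 0 < (ENNReal.ofReal p).toReal := by rw [hqt]; exact hp0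
    apply memℓp_gen
    have he : (fun i => ‖canExt φ (x i)‖ ^ (ENNReal.ofReal p).toReal)
        = fun i => ‖x i‖ ^ (ENNReal.ofReal p).toReal := by
      funext i; rw [norm_canExt]
    rw [he]; exact (lp.hasSum_norm hqt0 x).summable⟩

variable (φ : Metric.sphere (0:X) 1 → Metric.sphere (0:Y) 1)
    {p : ℝ} (hp : 1 ≤ p) [Fact (1 ≤ ENNReal.ofReal p)]

lemma PhiLp_apply (x : lp (fun _ : ℕ => X) (ENNReal.ofReal p)) (i : ℕ) :
    PhiLp φ hp x i = canExt φ (x i) := rfl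

lemma norm_PhiLp (x : lp (fun _ : ℕ => X) (ENNReal.ofReal p)) :
    ‖PhiLp φ hp x‖ = ‖x‖ := by
  have hp0 : 0 < p := lt_of_lt_of_le one_pos hp
  have hqt0 : 0 < (ENNReal.ofReal p).toReal := by
    rw [ENNReal.toReal_ofReal hp0.le]; exact hp0
  have h1 : ‖PhiLp φ hp x‖ ^ (ENNReal.ofReal p).toReal
      = ‖x‖ ^ (ENNReal.ofReal p).toReal := by
    rw [lp.norm_rpow_eq_tsum hqt0, lp.norm_rpow_eq_tsum hqt0]
    congr 1; funext i; congr 1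
    exact norm_canExt φ (x i)
  exact le_antisymm
    ((Real.rpow_le_rpow_iff (norm_nonneg _) (norm_nonneg _) hqt0).mp h1.le)
    ((Real.rpow_le_rpow_iff (norm_nonneg _) (norm_nonneg _) hqt0).mp h1.ge)

lemma PhiLp_uc_est {ε t : ℝ} (hε : 0 < ε) (ht : 0 < t)
    (hmod : ∀ a b : Metric.sphere (0:X) 1,
      ‖(a:X) - (b:X)‖ ≤ t → ‖(φ a : Y) - (φ b : Y)‖ ≤ ε)
    (x y : lp (fun _ : ℕ => X) (ENNReal.ofReal p)) (hx : ‖x‖ = 1) :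
    ‖PhiLp φ hp x - PhiLp φ hp y‖ ≤ (1 + 4/t) * ‖x - y‖ + ε := by
  obtain ⟨hm_sum, hm_le1⟩ := min_summable hp x y hx
  obtain ⟨hd_sum, hd_eq⟩ := norm_sub_summable hp x y
  have hc0 : (0:ℝ) < 1 + 4/t := by positivity
  have heq : (fun i => ((1 + 4/t) * ‖x i - y i‖) ^ p)
      = fun i => (1 + 4/t) ^ p * ‖x i - y i‖ ^ p :=
    funext fun i => Real.mul_rpow hc0.le (norm_nonneg _)
  have heqb : (fun i => (ε * min ‖x i‖ ‖y i‖) ^ p)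
      = fun i => ε ^ p * (min ‖x i‖ ‖y i‖) ^ p :=
    funext fun i => Real.mul_rpow hε.le (le_min (norm_nonneg _) (norm_nonneg _))
  refine lp_norm_le_add hp (PhiLp φ hp x - PhiLp φ hp y)
    (fun i => (1 + 4/t) * ‖x i - y i‖) (fun i => ε * min ‖x i‖ ‖y i‖)
    (fun i => by positivity)
    (fun i => mul_nonneg hε.le (le_min (norm_nonneg _) (norm_nonneg _)))
    (fun i => ?_) ?_ ?_ ((1 + 4/t) * ‖x - y‖) ε
    (mul_nonneg hc0.le (norm_nonneg _)) hε.le ?_ ?_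
  · show ‖canExt φ (x i) - canExt φ (y i)‖ ≤ _
    exact canExt_uc_bound φ hε.le ht hmod (x i) (y i)
  · rw [heq]; exact hd_sum.mul_left _
  · rw [heqb]; exact hm_sum.mul_left _
  · rw [heq, tsum_mul_left, hd_eq, Real.mul_rpow hc0.le (norm_nonneg _)]
  · rw [heqb, tsum_mul_left]
    calc (ε:ℝ) ^ p * ∑' i, (min ‖x i‖ ‖y i‖) ^ p ≤ ε ^ p * 1 :=
        mul_le_mul_of_nonneg_left hm_le1 (Real.rpow_nonneg hε.le _)
    _ = ε ^ p := mul_one _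

lemma PhiLp_holder_est {C α : ℝ} (hC : 0 < C) (hα : 0 < α) (hα1 : α ≤ 1)
    (hmod : ∀ a b : Metric.sphere (0:X) 1,
      ‖(φ a : Y) - (φ b : Y)‖ ≤ C * ‖(a:X) - (b:X)‖ ^ α)
    (x y : lp (fun _ : ℕ => X) (ENNReal.ofReal p))
    (hx : ‖x‖ = 1) (hy : ‖y‖ = 1) :
    ‖PhiLp φ hp x - PhiLp φ hp y‖ ≤ (2*C+2) * ‖x - y‖ ^ α := by
  have hp0 : 0 < p := lt_of_lt_of_le one_pos hp
  have hD0 : (0:ℝ) ≤ ‖x - y‖ := norm_nonneg _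
  rcases eq_or_lt_of_le hD0 with hD | hDpos
  · -- ‖x - y‖ = 0
    have hxy : x = y := by
      have h0 : ‖x - y‖ = 0 := hD.symm
      exact sub_eq_zero.mp (norm_eq_zero.mp h0)
    rw [hxy, sub_self, norm_zero, sub_self, norm_zero, Real.zero_rpow hα.ne', mul_zero]
  obtain ⟨hm_sum, hm_le1⟩ := min_summable hp x y hx
  obtain ⟨hd_sum, hd_eq⟩ := norm_sub_summable hp x y
  have hm0 : ∀ i, (0:ℝ) ≤ min ‖x i‖ ‖y i‖ := fun i => le_min (norm_nonneg _) (norm_nonneg _)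
  have hd0 : ∀ i, (0:ℝ) ≤ ‖x i - y i‖ := fun i => norm_nonneg _
  have hD2 : ‖x - y‖ ≤ 2 := by
    calc ‖x - y‖ ≤ ‖x‖ + ‖y‖ := norm_sub_le _ _
    _ = 2 := by rw [hx, hy]; norm_num
  have hDα0 : (0:ℝ) < ‖x - y‖ ^ α := Real.rpow_pos_of_pos hDpos α
  -- the a-part estimate
  have hAs : ∑' i, ‖x i - y i‖ ^ p ≤ (2 * ‖x - y‖ ^ α) ^ p := by
    rw [hd_eq]
    refine Real.rpow_le_rpow hD0 ?_ hp0.le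
    have h1 : ‖x - y‖ ^ (1-α) ≤ 2 := by
      calc ‖x - y‖ ^ (1-α) ≤ (2:ℝ) ^ (1-α) :=
          Real.rpow_le_rpow hD0 hD2 (by linarith)
      _ ≤ (2:ℝ) ^ (1:ℝ) := Real.rpow_le_rpow_of_exponent_le one_le_two (by linarith)
      _ = 2 := Real.rpow_one 2
    have h2 : ‖x - y‖ = ‖x - y‖ ^ (1-α) * ‖x - y‖ ^ α := by
      rw [← Real.rpow_add hDpos, (by ring : (1-α)+α = (1:ℝ)), Real.rpow_one]
    have h3 := mul_le_mul_of_nonneg_right h1 hDα0.le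
    linarith
  -- the key Hölder-type tsum estimate
  have hlam0 : (0:ℝ) < ‖x - y‖ ^ (p*α) := Real.rpow_pos_of_pos hDpos _
  have hmu0 : (0:ℝ) < ‖x - y‖ ^ (p*α - p) := Real.rpow_pos_of_pos hDpos _
  have hgm : ∀ i, ((min ‖x i‖ ‖y i‖) ^ (1-α) * ‖x i - y i‖ ^ α) ^ p
      ≤ (1-α) * (‖x - y‖ ^ (p*α) * (min ‖x i‖ ‖y i‖) ^ p)
        + α * (‖x - y‖ ^ (p*α - p) * ‖x i - y i‖ ^ p) := by
    intro i
    have e1 : ((min ‖x i‖ ‖y i‖) ^ (1-α) * ‖x i - y i‖ ^ α) ^ p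
        = ((min ‖x i‖ ‖y i‖) ^ p) ^ (1-α) * (‖x i - y i‖ ^ p) ^ α := by
      rw [Real.mul_rpow (Real.rpow_nonneg (hm0 i) _) (Real.rpow_nonneg (hd0 i) _),
        ← Real.rpow_mul (hm0 i), ← Real.rpow_mul (hd0 i),
        ← Real.rpow_mul (hm0 i), ← Real.rpow_mul (hd0 i),
        mul_comm (1-α) p, mul_comm α p]
    have hlm : (‖x - y‖ ^ (p*α)) ^ (1-α) * (‖x - y‖ ^ (p*α - p)) ^ α = 1 := by
      rw [← Real.rpow_mul hD0, ← Real.rpow_mul hD0, ← Real.rpow_add hDpos,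
        (by ring : p*α*(1-α) + (p*α-p)*α = 0), Real.rpow_zero]
    have e2 : ((min ‖x i‖ ‖y i‖) ^ p) ^ (1-α) * (‖x i - y i‖ ^ p) ^ α
        = (‖x - y‖ ^ (p*α) * (min ‖x i‖ ‖y i‖) ^ p) ^ (1-α)
          * (‖x - y‖ ^ (p*α - p) * ‖x i - y i‖ ^ p) ^ α := by
      rw [Real.mul_rpow hlam0.le (Real.rpow_nonneg (hm0 i) _),
        Real.mul_rpow hmu0.le (Real.rpow_nonneg (hd0 i) _)]
      calc ((min ‖x i‖ ‖y i‖) ^ p) ^ (1-α) * (‖x i - y i‖ ^ p) ^ α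
          = ((‖x - y‖ ^ (p*α)) ^ (1-α) * (‖x - y‖ ^ (p*α - p)) ^ α)
            * (((min ‖x i‖ ‖y i‖) ^ p) ^ (1-α) * (‖x i - y i‖ ^ p) ^ α) := by
            rw [hlm, one_mul]
      _ = (‖x - y‖ ^ (p*α)) ^ (1-α) * ((min ‖x i‖ ‖y i‖) ^ p) ^ (1-α)
            * ((‖x - y‖ ^ (p*α - p)) ^ α * (‖x i - y i‖ ^ p) ^ α) := by ring
    rw [e1, e2]
    exact Real.geom_mean_le_arith_mean2_weighted (by linarith) hα.le
      (by positivity) (by positivity) (by ring)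
  have hrhs_sum : Summable (fun i =>
      (1-α) * (‖x - y‖ ^ (p*α) * (min ‖x i‖ ‖y i‖) ^ p)
        + α * (‖x - y‖ ^ (p*α - p) * ‖x i - y i‖ ^ p)) :=
    ((hm_sum.mul_left _).mul_left _).add ((hd_sum.mul_left _).mul_left _)
  have hlhs_sum : Summable (fun i =>
      ((min ‖x i‖ ‖y i‖) ^ (1-α) * ‖x i - y i‖ ^ α) ^ p) :=
    Summable.of_nonneg_of_le (fun i => Real.rpow_nonneg
      (mul_nonneg (Real.rpow_nonneg (hm0 i) _) (Real.rpow_nonneg (hd0 i) _)) _)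
      hgm hrhs_sum
  have hkey : ∑' i, ((min ‖x i‖ ‖y i‖) ^ (1-α) * ‖x i - y i‖ ^ α) ^ p
      ≤ (‖x - y‖ ^ α) ^ p := by
    calc ∑' i, ((min ‖x i‖ ‖y i‖) ^ (1-α) * ‖x i - y i‖ ^ α) ^ p
        ≤ ∑' i, ((1-α) * (‖x - y‖ ^ (p*α) * (min ‖x i‖ ‖y i‖) ^ p)
            + α * (‖x - y‖ ^ (p*α - p) * ‖x i - y i‖ ^ p)) :=
          Summable.tsum_le_tsum hgm hlhs_sum hrhs_sum
    _ = (1-α) * (‖x - y‖ ^ (p*α) * ∑' i, (min ‖x i‖ ‖y i‖) ^ p)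
          + α * (‖x - y‖ ^ (p*α - p) * ∑' i, ‖x i - y i‖ ^ p) := by
          rw [Summable.tsum_add ((hm_sum.mul_left _).mul_left _) ((hd_sum.mul_left _).mul_left _),
            tsum_mul_left, tsum_mul_left, tsum_mul_left, tsum_mul_left]
    _ ≤ (1-α) * ‖x - y‖ ^ (p*α) + α * (‖x - y‖ ^ (p*α - p) * ‖x - y‖ ^ p) := by
          rw [hd_eq]
          have h1 : ‖x - y‖ ^ (p*α) * ∑' i, (min ‖x i‖ ‖y i‖) ^ p
              ≤ ‖x - y‖ ^ (p*α) := by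
            calc ‖x - y‖ ^ (p*α) * ∑' i, (min ‖x i‖ ‖y i‖) ^ p
                ≤ ‖x - y‖ ^ (p*α) * 1 := mul_le_mul_of_nonneg_left hm_le1 hlam0.le
            _ = ‖x - y‖ ^ (p*α) := mul_one _
          have h2 : (0:ℝ) ≤ 1 - α := by linarith
          nlinarith
    _ = (‖x - y‖ ^ α) ^ p := by
          rw [← Real.rpow_add hDpos, (by ring : p*α - p + p = p*α),
            ← Real.rpow_mul hD0, mul_comm α p]
          ring
  -- b-part estimate
  have heqb : (fun i => (2*C * ((min ‖x i‖ ‖y i‖) ^ (1-α) * ‖x i - y i‖ ^ α)) ^ p)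
      = fun i => (2*C) ^ p * ((min ‖x i‖ ‖y i‖) ^ (1-α) * ‖x i - y i‖ ^ α) ^ p :=
    funext fun i => Real.mul_rpow (by positivity)
      (mul_nonneg (Real.rpow_nonneg (hm0 i) _) (Real.rpow_nonneg (hd0 i) _))
  have hmain := lp_norm_le_add hp (PhiLp φ hp x - PhiLp φ hp y)
    (fun i => ‖x i - y i‖)
    (fun i => 2*C * ((min ‖x i‖ ‖y i‖) ^ (1-α) * ‖x i - y i‖ ^ α))
    hd0
    (fun i => mul_nonneg (by positivity)
      (mul_nonneg (Real.rpow_nonneg (hm0 i) _) (Real.rpow_nonneg (hd0 i) _)))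
    (fun i => by
      show ‖canExt φ (x i) - canExt φ (y i)‖ ≤ _
      exact canExt_holder_bound φ hC hα hα1 hmod (x i) (y i))
    hd_sum
    (by rw [heqb]; exact hlhs_sum.mul_left _)
    (A := 2 * ‖x - y‖ ^ α) (B := 2*C * ‖x - y‖ ^ α)
    (by positivity) (by positivity)
    hAs
    (by
      rw [heqb, tsum_mul_left, Real.mul_rpow (by positivity) (Real.rpow_nonneg hD0 _)]
      exact mul_le_mul_of_nonneg_left hkey (by positivity))
  calc ‖PhiLp φ hp x - PhiLp φ hp y‖
      ≤ 2 * ‖x - y‖ ^ α + 2*C * ‖x - y‖ ^ α := hmain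
  _ = (2*C+2) * ‖x - y‖ ^ α := by ring

end PhiLp
theorem coordinatewise_sphere_map_lp
    (X Y : Type*) [NormedAddCommGroup X] [NormedSpace ℝ X] [CompleteSpace X]
    [NormedAddCommGroup Y] [NormedSpace ℝ Y] [CompleteSpace Y]
    (φ : Metric.sphere (0:X) 1 → Metric.sphere (0:Y) 1) (hφ : UniformContinuous φ)
    (p : ℝ) (hp : 1 ≤ p) [Fact (1 ≤ ENNReal.ofReal p)] :
    ∃ Φ : Metric.sphere (0 : lp (fun _ : ℕ => X) (ENNReal.ofReal p)) 1 →
          Metric.sphere (0 : lp (fun _ : ℕ => Y) (ENNReal.ofReal p)) 1,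
      (∀ (x : Metric.sphere (0 : lp (fun _ : ℕ => X) (ENNReal.ofReal p)) 1) (i : ℕ),
        (↑(Φ x) : lp (fun _ : ℕ => Y) (ENNReal.ofReal p)) i =
          canExt φ ((↑x : lp (fun _ : ℕ => X) (ENNReal.ofReal p)) i)) ∧
      UniformContinuous Φ ∧
      (∀ (σ : Equiv.Perm ℕ)
        (x y : Metric.sphere (0 : lp (fun _ : ℕ => X) (ENNReal.ofReal p)) 1),
        (∀ i, (↑y : lp (fun _ : ℕ => X) (ENNReal.ofReal p)) i =
              (↑x : lp (fun _ : ℕ => X) (ENNReal.ofReal p)) (σ⁻¹ i)) →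
        ∀ i, (↑(Φ y) : lp (fun _ : ℕ => Y) (ENNReal.ofReal p)) i =
             (↑(Φ x) : lp (fun _ : ℕ => Y) (ENNReal.ofReal p)) (σ⁻¹ i)) ∧
      (∀ C α : ℝ, 0 < C → 0 < α → α ≤ 1 →
        (∀ x₁ x₂ : Metric.sphere (0:X) 1,
          ‖(φ x₁ : Y) - (φ x₂ : Y)‖ ≤ C * ‖(x₁ : X) - (x₂ : X)‖ ^ α) →
        ∀ x y : Metric.sphere (0 : lp (fun _ : ℕ => X) (ENNReal.ofReal p)) 1,
          ‖(↑(Φ x) : lp (fun _ : ℕ => Y) (ENNReal.ofReal p)) -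
            (↑(Φ y) : lp (fun _ : ℕ => Y) (ENNReal.ofReal p))‖ ≤
          (2 * C + 2) * ‖(↑x : lp (fun _ : ℕ => X) (ENNReal.ofReal p)) -
            (↑y : lp (fun _ : ℕ => X) (ENNReal.ofReal p))‖ ^ α) := by
  refine ⟨fun x => ⟨PhiLp φ hp ↑x, by
      rw [mem_sphere_zero_iff_norm, norm_PhiLp]
      exact mem_sphere_zero_iff_norm.mp x.2⟩, fun x i => rfl, ?_, ?_, ?_⟩
  · -- uniform continuity
    rw [Metric.uniformContinuous_iff]
    intro ε hε
    obtain ⟨t, ht, hmod'⟩ := Metric.uniformContinuous_iff.mp hφ (ε/3) (by positivity)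
    have hmod : ∀ a b : Metric.sphere (0:X) 1,
        ‖(a:X) - (b:X)‖ ≤ t/2 → ‖(φ a : Y) - (φ b : Y)‖ ≤ ε/3 := by
      intro a b hab
      have h1 : dist a b < t := by
        rw [Subtype.dist_eq, dist_eq_norm]; linarith
      have h2 := hmod' h1
      rw [Subtype.dist_eq, dist_eq_norm] at h2
      exact h2.le
    have hc0 : (0:ℝ) < 1 + 4/(t/2) := by positivity
    refine ⟨(ε/3)/(1 + 4/(t/2)), by positivity, ?_⟩
    intro x y hxy
    rw [Subtype.dist_eq, dist_eq_norm] at hxy ⊢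
    have hest := PhiLp_uc_est φ hp (by positivity : (0:ℝ) < ε/3) (by positivity : (0:ℝ) < t/2)
      hmod (↑x) (↑y) (mem_sphere_zero_iff_norm.mp x.2)
    have hlt : (1 + 4/(t/2)) * ‖(↑x : lp (fun _ : ℕ => X) (ENNReal.ofReal p)) - ↑y‖
        < (1 + 4/(t/2)) * ((ε/3)/(1 + 4/(t/2))) := by
      exact mul_lt_mul_of_pos_left hxy hc0
    have heq : (1 + 4/(t/2)) * ((ε/3)/(1 + 4/(t/2))) = ε/3 := by
      field_simp
    rw [← dist_eq_norm]
    calc dist (PhiLp φ hp ↑x) (PhiLp φ hp ↑y)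
        = ‖PhiLp φ hp (↑x : lp (fun _ : ℕ => X) (ENNReal.ofReal p)) - PhiLp φ hp ↑y‖ :=
          dist_eq_norm _ _
    _ ≤ (1 + 4/(t/2)) * ‖(↑x : lp (fun _ : ℕ => X) (ENNReal.ofReal p)) - ↑y‖ + ε/3 := hest
    _ < ε/3 + ε/3 := by rw [← heq]; linarith
    _ < ε := by linarith
  · -- equivariance
    intro σ x y hxy i
    show canExt φ ((↑y : lp (fun _ : ℕ => X) (ENNReal.ofReal p)) i)
      = canExt φ ((↑x : lp (fun _ : ℕ => X) (ENNReal.ofReal p)) (σ⁻¹ i))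
    rw [hxy i]
  · -- Hölder
    intro C α hC hα hα1 hmod x y
    exact PhiLp_holder_est φ hp hC hα hα1 hmod (↑x) (↑y)
      (mem_sphere_zero_iff_norm.mp x.2) (mem_sphere_zero_iff_norm.mp y.2)
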